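/- Let (s,t) be an edge with s<t. Suppose an execution contains two transitions A_0 ↦ A_1 and A_2 ↦ A_3 and a configuration A_4, with A_1 ↦* A_2 and A_3 ↦* A_4, such that: in A_0 ↦ A_1 node t executes an s-rule; in A_2 ↦ A_3 node s executes the Reset rule; and in A_4 it holds that (p_s, m_s) = (t,1). Then the edge (s,t) is in a correct state in A_4. -/
import Mathlib


/-!
Formal model of the self-stabilizing maximal-matching algorithm in the
link-register model under read/write atomicity.

Nodes form a finite simple graph `G` on a vertex type `V` whose linear order
plays the role of the distinct identifiers.  A configuration records, for each
node `u`, its pointer `p u : Option V` (`none` = null), its lock variable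
`m u : Fin 3`, and for each (directed) link a register `r u v : RegFlag × Fin 3`.
-/

inductive RegFlag where
  | Idle | You | Other
deriving DecidableEq

abbrev RegVal : Type := RegFlag × Fin 3

inductive Rule (V : Type) where
  | write (a : V)
  | seduction (a : V)
  | marriage (a : V)
  | increase
  | reset
deriving DecidableEq

structure Config (V : Type) where
  p : V → Option V
  m : V → Fin 3
  r : V → V → RegVal

variable {V : Type}

def correctRegisterValue [DecidableEq V] (C : Config V) (u a : V) : RegVal :=
  match C.p u with
  | none => (RegFlag.Idle, 0)
  | some b => if b = a then (RegFlag.You, C.m u) else (RegFlag.Other, C.m u)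

def PRabandonment [LinearOrder V] (C : Config V) (u : V) : Prop :=
  ∃ v, C.p u = some v ∧
    (((C.r v u).1 ≠ RegFlag.You ∧ (v < u ∨ C.m u ≠ 0)) ∨
     (C.r v u = (RegFlag.Other, 2) ∧ u < v))

def PRreset [LinearOrder V] (C : Config V) (u : V) : Prop :=
  ∃ v, C.p u = some v ∧ (C.r v u).1 = RegFlag.You ∧
    ((C.m u = 0 ∧ (C.r v u).2 = 2) ∨
     (C.m u = 2 ∧ (C.r v u).2 = 0) ∨
     (C.m u = 0 ∧ (C.r v u).2 = 1 ∧ v < u) ∨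
     (C.m u = 1 ∧ (C.r v u).2 = 0 ∧ u < v) ∨
     (C.m u = 1 ∧ (C.r v u).2 = 2 ∧ u < v) ∨
     (C.m u = 2 ∧ (C.r v u).2 = 1 ∧ v < u))

/-- The guard of each rule of node `u` in configuration `C`. -/
def eligible [LinearOrder V] (G : SimpleGraph V) (C : Config V) (u : V) : Rule V → Prop
  | .write a => G.Adj u a ∧ C.r u a ≠ correctRegisterValue C u a
  | .seduction a => G.Adj u a ∧ C.p u = none ∧ C.r u a = correctRegisterValue C u a ∧
      C.r a u = (RegFlag.Idle, 0) ∧ u < a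
  | .marriage a => G.Adj u a ∧ C.p u = none ∧ C.r u a = correctRegisterValue C u a ∧
      C.r a u = (RegFlag.You, 0) ∧ a < u
  | .increase => ∃ v, C.p u = some v ∧ C.r u v = correctRegisterValue C u v ∧
      (C.r v u).1 = RegFlag.You ∧
      ((C.m u = 0 ∧ ((u < v ∧ (C.r v u).2 = 1) ∨ (v < u ∧ (C.r v u).2 = 0))) ∨
       (C.m u = 1 ∧ ((u < v ∧ (C.r v u).2 = 1) ∨ (v < u ∧ (C.r v u).2 = 2))))
  | .reset => ∃ v, C.p u = some v ∧ C.r u v = correctRegisterValue C u v ∧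
      (PRabandonment C u ∨ PRreset C u)

/-- Simultaneous application of (at most) one rule per node.  `A u = some R`
means node `u` executes rule `R`; each action only modifies the data owned by
the acting node. -/
def step [DecidableEq V] (C : Config V) (A : V → Option (Rule V)) : Config V where
  p u :=
    match A u with
    | some (Rule.seduction a) => some a
    | some (Rule.marriage a) => some a
    | some Rule.reset => none
    | _ => C.p u
  m u :=
    match A u with
    | some (Rule.seduction _) => 0
    | some (Rule.marriage _) => 0
    | some Rule.reset => 0
    | some Rule.increase => C.m u + 1
    | _ => C.m u
  r u a :=
    match A u with
    | some (Rule.write b) => if a = b then correctRegisterValue C u a else C.r u a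
    | _ => C.r u a

/-- An execution `C_0, A_0, C_1, A_1, …, C_T`: at each transition `i < T`, a
nonempty set of eligible rules (at most one per node) is executed
simultaneously. -/
structure Execution [LinearOrder V] (G : SimpleGraph V) where
  T : ℕ
  conf : ℕ → Config V
  act : ℕ → V → Option (Rule V)
  act_nonempty : ∀ i < T, ∃ u, (act i u).isSome
  act_eligible : ∀ i < T, ∀ u R, act i u = some R → eligible G (conf i) u R
  conf_succ : ∀ i < T, conf (i + 1) = step (conf i) (act i)

/-- A configuration is stable if no rule is eligible at any node. -/
def stableConfig [LinearOrder V] (G : SimpleGraph V) (C : Config V) : Prop :=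
  ∀ u R, ¬ eligible G C u R

/-- The edge `(s,t)` (with `s < t` intended) is in state `(You, α, β)`. -/
def edgeState (C : Config V) (s t : V) (α β : Fin 3) : Prop :=
  C.p s = some t ∧ C.p t = some s ∧ C.m s = α ∧ C.m t = β

def updatedCorrectState (C : Config V) (s t : V) (α β : Fin 3) : Prop :=
  edgeState C s t α β ∧ C.r s t = (RegFlag.You, α) ∧ C.r t s = (RegFlag.You, β) ∧
    ((α, β) = ((0 : Fin 3), (0 : Fin 3)) ∨ (α, β) = (0, 1) ∨ (α, β) = (1, 1) ∨
     (α, β) = (2, 1) ∨ (α, β) = (2, 2))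

def toUpdateCorrectState (C : Config V) (s t : V) (α β : Fin 3) : Prop :=
  edgeState C s t α β ∧
    ((((α, β) = ((0 : Fin 3), (1 : Fin 3)) ∨ (α, β) = (2, 2)) ∧
        C.r s t = (RegFlag.You, α) ∧ C.r t s = (RegFlag.You, β - 1)) ∨
     (((α, β) = ((1 : Fin 3), (1 : Fin 3)) ∨ (α, β) = (2, 1)) ∧
        C.r s t = (RegFlag.You, α - 1) ∧ C.r t s = (RegFlag.You, β)))

def correctState (C : Config V) (s t : V) (α β : Fin 3) : Prop :=
  updatedCorrectState C s t α β ∨ toUpdateCorrectState C s t α β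

/-- Node `u` executes a `v`-rule in transition `k`: one of `Write(v)`,
`Seduction(v)`, `Marriage(v)`, a `v`-`Increase` or a `v`-`Reset`. -/
def execVRule [LinearOrder V] {G : SimpleGraph V} (E : Execution G) (k : ℕ) (u v : V) : Prop :=
  k < E.T ∧
    (E.act k u = some (Rule.write v) ∨ E.act k u = some (Rule.seduction v) ∨
     E.act k u = some (Rule.marriage v) ∨
     ((E.act k u = some Rule.increase ∨ E.act k u = some Rule.reset) ∧
       (E.conf k).p u = some v))
section Helpers

/-- Does this action change the pointer `p` of the acting node? -/
def isPCh {V : Type} : Option (Rule V) → Bool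
  | some (Rule.seduction _) => true
  | some (Rule.marriage _) => true
  | some Rule.reset => true
  | _ => false

/-- Does this action change `p` or `m` of the acting node? -/
def isMv {V : Type} : Option (Rule V) → Bool
  | some (Rule.seduction _) => true
  | some (Rule.marriage _) => true
  | some Rule.reset => true
  | some Rule.increase => true
  | _ => false

variable {V : Type} [LinearOrder V] {G : SimpleGraph V} (E : Execution G)

lemma conf_invariant {P : Config V → Prop} :
    ∀ {a b : ℕ}, a ≤ b → b ≤ E.T → P (E.conf a) →
      (∀ z, a ≤ z → z < b → P (E.conf z) → P (E.conf (z + 1))) → P (E.conf b) := by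
  intro a b hab
  induction b, hab using Nat.le_induction with
  | base => intro _ h _; exact h
  | succ n hn ih =>
    intro hT base ind
    exact ind n hn (by omega)
      (ih (by omega) base (fun z h1 h2 => ind z h1 (by omega)))

lemma p_succ (u : V) {z : ℕ} (hz : z < E.T) :
    (E.conf (z + 1)).p u =
      match E.act z u with
      | some (Rule.seduction a) => some a
      | some (Rule.marriage a) => some a
      | some Rule.reset => none
      | _ => (E.conf z).p u := by
  rw [E.conf_succ z hz]; rfl

lemma m_succ (u : V) {z : ℕ} (hz : z < E.T) :
    (E.conf (z + 1)).m u =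
      match E.act z u with
      | some (Rule.seduction _) => 0
      | some (Rule.marriage _) => 0
      | some Rule.reset => 0
      | some Rule.increase => (E.conf z).m u + 1
      | _ => (E.conf z).m u := by
  rw [E.conf_succ z hz]; rfl

lemma r_succ (u a : V) {z : ℕ} (hz : z < E.T) :
    (E.conf (z + 1)).r u a =
      match E.act z u with
      | some (Rule.write b) =>
          if a = b then correctRegisterValue (E.conf z) u a else (E.conf z).r u a
      | _ => (E.conf z).r u a := by
  rw [E.conf_succ z hz]; rfl

lemma p_succ_quiet (u : V) {z : ℕ} (hz : z < E.T) (h : isPCh (E.act z u) = false) :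
    (E.conf (z + 1)).p u = (E.conf z).p u := by
  rw [p_succ E u hz]
  rcases hA : E.act z u with _ | R
  · rfl
  · rw [hA] at h; cases R <;> simp [isPCh] at h ⊢

lemma m_succ_quiet (u : V) {z : ℕ} (hz : z < E.T) (h : isMv (E.act z u) = false) :
    (E.conf (z + 1)).m u = (E.conf z).m u := by
  rw [m_succ E u hz]
  rcases hA : E.act z u with _ | R
  · rfl
  · rw [hA] at h; cases R <;> simp [isMv] at h ⊢

lemma r_succ_quiet (u a : V) {z : ℕ} (hz : z < E.T)
    (h : E.act z u ≠ some (Rule.write a)) :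
    (E.conf (z + 1)).r u a = (E.conf z).r u a := by
  rw [r_succ E u a hz]
  rcases hA : E.act z u with _ | R
  · rfl
  · cases R with
    | write b =>
        rw [hA] at h
        have hb : a ≠ b := fun hab => h (by rw [hab])
        simp [hb]
    | seduction b => rfl
    | marriage b => rfl
    | increase => rfl
    | reset => rfl

lemma r_succ_write (u a : V) {z : ℕ} (hz : z < E.T)
    (h : E.act z u = some (Rule.write a)) :
    (E.conf (z + 1)).r u a = correctRegisterValue (E.conf z) u a := by
  rw [r_succ E u a hz, h]; simp

lemma p_const (u : V) {a b : ℕ} (hab : a ≤ b) (hbT : b ≤ E.T)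
    (h : ∀ z, a ≤ z → z < b → isPCh (E.act z u) = false) :
    (E.conf b).p u = (E.conf a).p u :=
  conf_invariant E (P := fun C => C.p u = (E.conf a).p u) hab hbT rfl
    (fun z h1 h2 hP => by
      show (E.conf (z+1)).p u = _
      rw [p_succ_quiet E u (lt_of_lt_of_le h2 hbT) (h z h1 h2)]; exact hP)

lemma pm_const (u : V) {a b : ℕ} (hab : a ≤ b) (hbT : b ≤ E.T)
    (h : ∀ z, a ≤ z → z < b → isMv (E.act z u) = false) :
    (E.conf b).p u = (E.conf a).p u ∧ (E.conf b).m u = (E.conf a).m u :=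
  conf_invariant E
    (P := fun C => C.p u = (E.conf a).p u ∧ C.m u = (E.conf a).m u) hab hbT ⟨rfl, rfl⟩
    (fun z h1 h2 hP => by
      have hmv := h z h1 h2
      have hpc : isPCh (E.act z u) = false := by
        rcases hA : E.act z u with _ | R
        · rfl
        · rw [hA] at hmv; cases R <;> simp [isMv, isPCh] at hmv ⊢
      constructor
      · show (E.conf (z+1)).p u = _
        rw [p_succ_quiet E u (lt_of_lt_of_le h2 hbT) hpc]; exact hP.1
      · show (E.conf (z+1)).m u = _
        rw [m_succ_quiet E u (lt_of_lt_of_le h2 hbT) hmv]; exact hP.2)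

lemma reg_const (u a : V) {x y : ℕ} (hxy : x ≤ y) (hyT : y ≤ E.T)
    (h : ∀ z, x ≤ z → z < y → E.act z u ≠ some (Rule.write a)) :
    (E.conf y).r u a = (E.conf x).r u a :=
  conf_invariant E (P := fun C => C.r u a = (E.conf x).r u a) hxy hyT rfl
    (fun z h1 h2 hP => by
      show (E.conf (z+1)).r u a = _
      rw [r_succ_quiet E u a (lt_of_lt_of_le h2 hyT) (h z h1 h2)]; exact hP)

lemma exists_first_change {α : Type*} (f : ℕ → α) {a b : ℕ} (hab : a ≤ b)
    (h : f a ≠ f b) : ∃ z, a ≤ z ∧ z < b ∧ f z = f a ∧ f (z + 1) ≠ f a := by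
  induction b, hab using Nat.le_induction with
  | base => exact absurd rfl h
  | succ n hn ih =>
    by_cases hfn : f a = f n
    · exact ⟨n, hn, Nat.lt_succ_self n, hfn.symm, fun hc => h (hc ▸ rfl)⟩
    · obtain ⟨z, h1, h2, h3, h4⟩ := ih hfn
      exact ⟨z, h1, by omega, h3, h4⟩

lemma correct_you {C : Config V} {u a : V} {c : Fin 3}
    (h : correctRegisterValue C u a = (RegFlag.You, c)) :
    C.p u = some a ∧ C.m u = c := by
  unfold correctRegisterValue at h
  rcases hp : C.p u with _ | b <;> rw [hp] at h <;> dsimp only at h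
  · simp at h
  · by_cases hb : b = a
    · subst hb
      rw [if_pos rfl] at h
      simp only [Prod.mk.injEq] at h
      exact ⟨rfl, h.2⟩
    · simp [hb] at h

lemma correct_of_you {C : Config V} {u a : V} (hp : C.p u = some a) :
    correctRegisterValue C u a = (RegFlag.You, C.m u) := by
  simp [correctRegisterValue, hp]

end Helpers

/-- Let `(s,t)` be an edge with `s < t`.  If `t` executes an
`s`-rule in transition `i`, then `s` executes a `Reset` in transition `j`
(`i + 1 ≤ j`), and `(p_s,m_s) = (t,1)` in `A_4 = conf l` (`j + 1 ≤ l ≤ T`),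
then the edge `(s,t)` is in a correct state in `A_4`. -/
theorem stmt_16 {V : Type} [Fintype V] [LinearOrder V] (G : SimpleGraph V)
    (s t : V) (hadj : G.Adj s t) (hst : s < t) (E : Execution G)
    (i j l : ℕ) (hij : i + 1 ≤ j) (hjl : j + 1 ≤ l) (hlT : l ≤ E.T)
    (hi : execVRule E i t s)
    (hjT : j < E.T) (hj : E.act j s = some Rule.reset)
    (hlp : (E.conf l).p s = some t) (hlm : (E.conf l).m s = 1) :
    ∃ α β, correctState (E.conf l) s t α β := by
  classical
  have hnst : ¬ t < s := not_lt.mpr hst.le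
  have fin1 : ∀ m : Fin 3, m + 1 = 1 → m = 0 := by decide
  have fin2 : ∀ m : Fin 3, m ≠ 2 → m = 0 ∨ m = 1 := by decide
  have pext : ∀ (r : RegVal) (f : RegFlag) (c : Fin 3), r.1 = f → r.2 = c → r = (f, c) := by
    intro r f c h1 h2; cases r; cases h1; cases h2; rfl
  have hi' : i < E.T ∧
      (E.act i t = some (Rule.write s) ∨ E.act i t = some (Rule.seduction s) ∨
       E.act i t = some (Rule.marriage s) ∨
       ((E.act i t = some Rule.increase ∨ E.act i t = some Rule.reset) ∧
         (E.conf i).p t = some s)) := hi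
  obtain ⟨hiT, hidisj⟩ := hi'
  -- k : the last pointer-changing action of s strictly before l
  have hQj : isPCh (E.act j s) = true := by rw [hj]; rfl
  obtain ⟨k, hjk, hkl, hQk, hnoPCh⟩ :
      ∃ k, j ≤ k ∧ k < l ∧ isPCh (E.act k s) = true ∧
        ∀ z, k < z → z < l → isPCh (E.act z s) = false := by
    refine ⟨Nat.findGreatest (fun z => isPCh (E.act z s) = true) (l - 1),
      Nat.le_findGreatest (n := l - 1) (by omega) hQj, ?_,
      Nat.findGreatest_spec (P := fun z => isPCh (E.act z s) = true) (m := j) (n := l - 1) (by omega) hQj, ?_⟩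
    · have := Nat.findGreatest_le (P := fun z => isPCh (E.act z s) = true) (l - 1)
      omega
    · intro z h1 h2
      have := Nat.findGreatest_is_greatest
        (P := fun z => isPCh (E.act z s) = true) (k := z) h1 (by omega)
      simpa using this
  have hkT : k < E.T := lt_of_lt_of_le hkl hlT
  -- p of s is constantly `some t` on [k+1, l]
  have hps : ∀ x, k + 1 ≤ x → x ≤ l → (E.conf x).p s = some t := by
    intro x h1 h2
    have h4 := p_const E s (a := x) (b := l) h2 hlT
      (fun z hz1 hz2 => hnoPCh z (by omega) hz2)
    exact h4.symm.trans hlp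
  have hpksucc : (E.conf (k + 1)).p s = some t := hps (k + 1) le_rfl (by omega)
  -- the action of s at k is Seduction(t)
  have hsed : E.act k s = some (Rule.seduction t) := by
    have hp := p_succ E s hkT
    rcases hA : E.act k s with _ | R
    · rw [hA] at hQk; exact absurd hQk (by simp [isPCh])
    · cases R with
      | write a => rw [hA] at hQk; exact absurd hQk (by simp [isPCh])
      | increase => rw [hA] at hQk; exact absurd hQk (by simp [isPCh])
      | reset =>
          rw [hA] at hp; rw [hpksucc] at hp
          exact absurd hp (by simp)
      | seduction a =>
          rw [hA] at hp; rw [hpksucc] at hp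
          have hat : a = t := by injection hp with h; exact h.symm
          rw [hat]
      | marriage a =>
          rw [hA] at hp; rw [hpksucc] at hp
          have hat : a = t := by injection hp with h; exact h.symm
          subst hat
          have helig : G.Adj s a ∧ (E.conf k).p s = none ∧
              (E.conf k).r s a = correctRegisterValue (E.conf k) s a ∧
              (E.conf k).r a s = (RegFlag.You, 0) ∧ a < s :=
            E.act_eligible k hkT s _ hA
          exact absurd helig.2.2.2.2 hnst
  have hsedg : G.Adj s t ∧ (E.conf k).p s = none ∧
      (E.conf k).r s t = correctRegisterValue (E.conf k) s t ∧
      (E.conf k).r t s = (RegFlag.Idle, 0) ∧ s < t :=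
    E.act_eligible k hkT s _ hsed
  have hpk0 : (E.conf k).p s = none := hsedg.2.1
  have hrstk : (E.conf k).r s t = (RegFlag.Idle, 0) := by
    rw [hsedg.2.2.1]; simp [correctRegisterValue, hpk0]
  have hrtsk : (E.conf k).r t s = (RegFlag.Idle, 0) := hsedg.2.2.2.1
  have hmksucc : (E.conf (k + 1)).m s = 0 := by
    rw [m_succ E s hkT, hsed]
  -- m of s is never 2 on [k+1, l]
  have hms2 : ∀ x, k + 1 ≤ x → x ≤ l → (E.conf x).m s ≠ 2 := by
    intro x h1 h2 hx2
    have h3 : (E.conf l).m s = 2 := by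
      refine conf_invariant E (P := fun C => C.m s = 2) h2 hlT hx2 ?_
      intro z hz1 hz2 hP
      have hzT : z < E.T := lt_of_lt_of_le hz2 hlT
      show (E.conf (z + 1)).m s = 2
      rcases hA : E.act z s with _ | R
      · rw [m_succ E s hzT, hA]; exact hP
      · cases R with
        | write a => rw [m_succ E s hzT, hA]; exact hP
        | seduction a =>
            exact absurd (hnoPCh z (by omega) hz2) (by rw [hA]; simp [isPCh])
        | marriage a =>
            exact absurd (hnoPCh z (by omega) hz2) (by rw [hA]; simp [isPCh])
        | reset =>
            exact absurd (hnoPCh z (by omega) hz2) (by rw [hA]; simp [isPCh])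
        | increase =>
            have hg : ∃ v, (E.conf z).p s = some v ∧
                (E.conf z).r s v = correctRegisterValue (E.conf z) s v ∧
                ((E.conf z).r v s).1 = RegFlag.You ∧
                (((E.conf z).m s = 0 ∧ ((s < v ∧ ((E.conf z).r v s).2 = 1) ∨
                    (v < s ∧ ((E.conf z).r v s).2 = 0))) ∨
                 ((E.conf z).m s = 1 ∧ ((s < v ∧ ((E.conf z).r v s).2 = 1) ∨
                    (v < s ∧ ((E.conf z).r v s).2 = 2)))) :=
              E.act_eligible z hzT s _ hA
            obtain ⟨v, -, -, -, hd⟩ := hg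
            rcases hd with ⟨h0, -⟩ | ⟨h0, -⟩ <;> rw [hP] at h0 <;>
              exact absurd h0 (by decide)
    rw [hlm] at h3; exact absurd h3 (by decide)
  -- q : the unique Increase of s in (k, l)
  obtain ⟨q, hq1, hq2, hq3, hq4⟩ :=
    exists_first_change (fun z => (E.conf z).m s) (a := k + 1) (b := l) (by omega)
      (by show (E.conf (k + 1)).m s ≠ (E.conf l).m s
          rw [hmksucc, hlm]; decide)
  have hq3' : (E.conf q).m s = (E.conf (k + 1)).m s := hq3
  have hq4' : (E.conf (q + 1)).m s ≠ (E.conf (k + 1)).m s := hq4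
  have hqT : q < E.T := lt_of_lt_of_le hq2 hlT
  have hmq0 : (E.conf q).m s = 0 := by rw [hq3', hmksucc]
  have hchg : (E.conf (q + 1)).m s ≠ (E.conf q).m s := by rw [hq3']; exact hq4'
  have hqinc : E.act q s = some Rule.increase := by
    rcases hA : E.act q s with _ | R
    · exact absurd (by rw [m_succ E s hqT, hA]) hchg
    · cases R with
      | write a => exact absurd (by rw [m_succ E s hqT, hA]) hchg
      | increase => rfl
      | seduction a =>
          exact absurd (hnoPCh q (by omega) hq2) (by rw [hA]; simp [isPCh])
      | marriage a =>
          exact absurd (hnoPCh q (by omega) hq2) (by rw [hA]; simp [isPCh])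
      | reset =>
          exact absurd (hnoPCh q (by omega) hq2) (by rw [hA]; simp [isPCh])
  have hqg : ∃ v, (E.conf q).p s = some v ∧
      (E.conf q).r s v = correctRegisterValue (E.conf q) s v ∧
      ((E.conf q).r v s).1 = RegFlag.You ∧
      (((E.conf q).m s = 0 ∧ ((s < v ∧ ((E.conf q).r v s).2 = 1) ∨
          (v < s ∧ ((E.conf q).r v s).2 = 0))) ∨
       ((E.conf q).m s = 1 ∧ ((s < v ∧ ((E.conf q).r v s).2 = 1) ∨
          (v < s ∧ ((E.conf q).r v s).2 = 2)))) :=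
    E.act_eligible q hqT s _ hqinc
  obtain ⟨v, hpv, -, hvYou, hd⟩ := hqg
  have hv : t = v := by
    rw [hps q (by omega) (by omega)] at hpv
    injection hpv with h
  subst v
  have hrtsq : (E.conf q).r t s = (RegFlag.You, 1) := by
    rcases hd with ⟨-, hc⟩ | ⟨h1, -⟩
    · rcases hc with ⟨-, h2⟩ | ⟨hls, -⟩
      · exact pext _ _ _ hvYou h2
      · exact absurd hls hnst
    · rw [hmq0] at h1; exact absurd h1 (by decide)
  -- w : last time before q at which r t s differs from (You,1)
  have hQ2k : (E.conf k).r t s ≠ (RegFlag.You, 1) := by rw [hrtsk]; decide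
  obtain ⟨w, hkw, hwq, hQ2w, hrts_after⟩ :
      ∃ w, k ≤ w ∧ w < q ∧ (E.conf w).r t s ≠ (RegFlag.You, 1) ∧
        ∀ y, w < y → y ≤ q → (E.conf y).r t s = (RegFlag.You, 1) := by
    refine ⟨Nat.findGreatest (fun z => (E.conf z).r t s ≠ (RegFlag.You, 1)) q,
      Nat.le_findGreatest (by omega) hQ2k, ?_,
      Nat.findGreatest_spec (P := fun z => (E.conf z).r t s ≠ (RegFlag.You, 1)) (m := k) (n := q) (by omega) hQ2k, ?_⟩
    · refine lt_of_le_of_ne (Nat.findGreatest_le _) (fun h => ?_)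
      have hspec := Nat.findGreatest_spec
        (P := fun z => (E.conf z).r t s ≠ (RegFlag.You, 1)) (m := k) (n := q)
        (by omega) hQ2k
      rw [h] at hspec
      exact hspec hrtsq
    · intro y h1 h2
      have := Nat.findGreatest_is_greatest
        (P := fun z => (E.conf z).r t s ≠ (RegFlag.You, 1)) h1 h2
      exact not_ne_iff.mp this
  have hwT : w < E.T := lt_of_lt_of_le (lt_of_lt_of_le hwq (le_of_lt hq2)) hlT
  have hwl : w < l := by omega
  have hrtsw1 : (E.conf (w + 1)).r t s = (RegFlag.You, 1) :=
    hrts_after (w + 1) (by omega) (by omega)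
  have hwwr : E.act w t = some (Rule.write s) := by
    by_contra hA
    rw [r_succ_quiet E t s hwT hA] at hrtsw1
    exact hQ2w hrtsw1
  have hcw : correctRegisterValue (E.conf w) t s = (RegFlag.You, 1) := by
    rw [← r_succ_write E t s hwT hwwr]; exact hrtsw1
  obtain ⟨hptw, hmtw⟩ := correct_you hcw
  -- case split : has t moved (p/m-changing action) at or before w ?
  by_cases hex : ∃ x, x ≤ w ∧ isMv (E.act x t) = true
  · -- yes : w1 is the last such move
    obtain ⟨x0, hx0, hQ3x0⟩ := hex
    obtain ⟨w1, hw1w, hQ3w1, hnomv⟩ :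
        ∃ w1, w1 ≤ w ∧ isMv (E.act w1 t) = true ∧
          ∀ y, w1 < y → y ≤ w → isMv (E.act y t) = false := by
      refine ⟨Nat.findGreatest (fun z => isMv (E.act z t) = true) w,
        Nat.findGreatest_le _, Nat.findGreatest_spec (P := fun z => isMv (E.act z t) = true) (n := w) hx0 hQ3x0, ?_⟩
      intro y h1 h2
      have := Nat.findGreatest_is_greatest
        (P := fun z => isMv (E.act z t) = true) h1 h2
      simpa using this
    have hw1T : w1 < E.T := lt_of_le_of_lt hw1w hwT
    have hw1w' : w1 < w := by
      rcases eq_or_lt_of_le hw1w with h | h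
      · rw [h, hwwr] at hQ3w1; exact absurd hQ3w1 (by simp [isMv])
      · exact h
    -- p,m of t constant on [w1+1, w]
    have hpm1 : ∀ x, w1 + 1 ≤ x → x ≤ w →
        (E.conf x).p t = some s ∧ (E.conf x).m t = 1 := by
      intro x h1 h2
      have h3 := pm_const E t (a := x) (b := w) h2 (le_of_lt hwT)
        (fun z hz1 hz2 => hnomv z (by omega) (by omega))
      exact ⟨h3.1.symm.trans hptw, h3.2.symm.trans hmtw⟩
    have hpmw1succ := hpm1 (w1 + 1) le_rfl (by omega)
    rcases hA1 : E.act w1 t with _ | R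
    · rw [hA1] at hQ3w1; exact absurd hQ3w1 (by simp [isMv])
    · cases R with
      | write a => rw [hA1] at hQ3w1; exact absurd hQ3w1 (by simp [isMv])
      | seduction a =>
          have h0 : (E.conf (w1 + 1)).m t = 0 := by rw [m_succ E t hw1T, hA1]
          rw [hpmw1succ.2] at h0; exact absurd h0 (by decide)
      | marriage a =>
          have h0 : (E.conf (w1 + 1)).m t = 0 := by rw [m_succ E t hw1T, hA1]
          rw [hpmw1succ.2] at h0; exact absurd h0 (by decide)
      | reset =>
          have h0 : (E.conf (w1 + 1)).p t = none := by rw [p_succ E t hw1T, hA1]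
          rw [hpmw1succ.1] at h0; exact absurd h0 (by simp)
      | increase =>
        have hmw1 : (E.conf w1).m t = 0 := by
          have h5 : (E.conf w1).m t + 1 = 1 := by
            have h6 : (E.conf (w1 + 1)).m t = (E.conf w1).m t + 1 := by
              rw [m_succ E t hw1T, hA1]
            rw [← h6, hpmw1succ.2]
          exact fin1 _ h5
        have hpw1 : (E.conf w1).p t = some s := by
          rw [← hpmw1succ.1, p_succ_quiet E t hw1T (by rw [hA1]; rfl)]
        have hg1 : ∃ v, (E.conf w1).p t = some v ∧
            (E.conf w1).r t v = correctRegisterValue (E.conf w1) t v ∧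
            ((E.conf w1).r v t).1 = RegFlag.You ∧
            (((E.conf w1).m t = 0 ∧ ((t < v ∧ ((E.conf w1).r v t).2 = 1) ∨
                (v < t ∧ ((E.conf w1).r v t).2 = 0))) ∨
             ((E.conf w1).m t = 1 ∧ ((t < v ∧ ((E.conf w1).r v t).2 = 1) ∨
                (v < t ∧ ((E.conf w1).r v t).2 = 2)))) :=
          E.act_eligible w1 hw1T t _ hA1
        obtain ⟨v, hpv1, hcorr1, hYou1, -⟩ := hg1
        have hv1 : s = v := by
          rw [hpw1] at hpv1; injection hpv1 with h
        subst v
        have hrtsw1' : (E.conf w1).r t s = (RegFlag.You, 0) := by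
          rw [hcorr1, correct_of_you hpw1, hmw1]
        rcases lt_trichotomy w1 k with hwk | hwk | hwk
        · -- w1 < k : the You flag survives until k, contradiction
          have hfin : ((E.conf k).r t s).1 = RegFlag.You := by
            refine conf_invariant E (P := fun C => (C.r t s).1 = RegFlag.You)
              (a := w1 + 1) (b := k) (by omega) (le_of_lt hkT) ?_ ?_
            · show ((E.conf (w1 + 1)).r t s).1 = RegFlag.You
              rw [r_succ_quiet E t s hw1T (by rw [hA1]; simp), hrtsw1']
            · intro z hz1 hz2 hP
              have hzT : z < E.T := lt_trans hz2 hkT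
              show ((E.conf (z + 1)).r t s).1 = RegFlag.You
              by_cases hA : E.act z t = some (Rule.write s)
              · rw [r_succ_write E t s hzT hA,
                  correct_of_you (hpm1 z (by omega) (by omega)).1]
              · rw [r_succ_quiet E t s hzT hA]; exact hP
          rw [hrtsk] at hfin; exact absurd hfin (by decide)
        · -- w1 = k : register clash at k
          rw [hwk, hrtsk] at hrtsw1'; exact absurd hrtsw1' (by decide)
        · -- w1 > k : the main case
          obtain ⟨k1, hk1a, hk1b, hk1w⟩ :
              ∃ k1, k ≤ k1 ∧ k1 < w1 ∧ E.act k1 s = some (Rule.write t) := by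
            by_contra hall
            push_neg at hall
            have hcst := reg_const E s t (x := k) (y := w1) (by omega)
              (le_of_lt hw1T) hall
            rw [hrstk] at hcst
            rw [hcst] at hYou1; exact absurd hYou1 (by decide)
          have hk1k : k < k1 := by
            rcases eq_or_lt_of_le hk1a with h | h
            · exfalso; rw [← h, hsed] at hk1w; simp at hk1w
            · exact h
          have hk1T : k1 < E.T := lt_trans hk1b hw1T
          -- register of s keeps flag You and value ≠ 2 from k1+1 on
          have hR : ∀ x, k1 + 1 ≤ x → x ≤ l →
              ((E.conf x).r s t).1 = RegFlag.You ∧ ((E.conf x).r s t).2 ≠ 2 := by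
            intro x hx1 hx2
            refine conf_invariant E
              (P := fun C => (C.r s t).1 = RegFlag.You ∧ (C.r s t).2 ≠ 2)
              hx1 (le_trans hx2 hlT) ?_ ?_
            · have hb : (E.conf (k1 + 1)).r s t = (RegFlag.You, (E.conf k1).m s) := by
                rw [r_succ_write E s t hk1T hk1w,
                  correct_of_you (hps k1 (by omega) (by omega))]
              constructor
              · show ((E.conf (k1 + 1)).r s t).1 = RegFlag.You
                rw [hb]
              · show ((E.conf (k1 + 1)).r s t).2 ≠ 2
                rw [hb]; exact hms2 k1 (by omega) (by omega)
            · intro z hz1 hz2 hP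
              have hzT : z < E.T := lt_of_lt_of_le (lt_of_lt_of_le hz2 hx2) hlT
              by_cases hA : E.act z s = some (Rule.write t)
              · have hb : (E.conf (z + 1)).r s t = (RegFlag.You, (E.conf z).m s) := by
                  rw [r_succ_write E s t hzT hA,
                    correct_of_you (hps z (by omega) (by omega))]
                constructor
                · show ((E.conf (z + 1)).r s t).1 = RegFlag.You
                  rw [hb]
                · show ((E.conf (z + 1)).r s t).2 ≠ 2
                  rw [hb]; exact hms2 z (by omega) (by omega)
              · constructor
                · show ((E.conf (z + 1)).r s t).1 = RegFlag.You
                  rw [r_succ_quiet E s t hzT hA]; exact hP.1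
                · show ((E.conf (z + 1)).r s t).2 ≠ 2
                  rw [r_succ_quiet E s t hzT hA]; exact hP.2
          -- main invariant for t from w+1 on
          have hI : ∀ x, w + 1 ≤ x → x ≤ l →
              (E.conf x).p t = some s ∧ (E.conf x).m t = 1 ∧
              (E.conf x).r t s = (RegFlag.You, 1) := by
            intro x hx1 hx2
            refine conf_invariant E
              (P := fun C => C.p t = some s ∧ C.m t = 1 ∧ C.r t s = (RegFlag.You, 1))
              hx1 (le_trans hx2 hlT) ?_ ?_
            · refine ⟨?_, ?_, hrtsw1⟩
              · show (E.conf (w + 1)).p t = some s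
                rw [p_succ_quiet E t hwT (by rw [hwwr]; rfl)]; exact hptw
              · show (E.conf (w + 1)).m t = 1
                rw [m_succ_quiet E t hwT (by rw [hwwr]; rfl)]; exact hmtw
            · intro z hz1 hz2 hPz
              obtain ⟨hp, hm, hr⟩ := hPz
              have hzT : z < E.T := lt_of_lt_of_le (lt_of_lt_of_le hz2 hx2) hlT
              have hRz := hR z (by omega) (by omega)
              show (E.conf (z + 1)).p t = some s ∧ (E.conf (z + 1)).m t = 1 ∧
                (E.conf (z + 1)).r t s = (RegFlag.You, 1)
              rcases hA : E.act z t with _ | R2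
              · exact ⟨by rw [p_succ_quiet E t hzT (by rw [hA]; rfl)]; exact hp,
                  by rw [m_succ_quiet E t hzT (by rw [hA]; rfl)]; exact hm,
                  by rw [r_succ_quiet E t s hzT (by rw [hA]; simp)]; exact hr⟩
              · cases R2 with
                | write a =>
                    refine ⟨by rw [p_succ_quiet E t hzT (by rw [hA]; rfl)]; exact hp,
                      by rw [m_succ_quiet E t hzT (by rw [hA]; rfl)]; exact hm, ?_⟩
                    by_cases has : a = s
                    · rw [has] at hA
                      rw [r_succ_write E t s hzT hA, correct_of_you hp, hm]
                    · rw [r_succ_quiet E t s hzT (by rw [hA]; simp [has])]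
                      exact hr
                | seduction a =>
                    have hg : G.Adj t a ∧ (E.conf z).p t = none ∧
                        (E.conf z).r t a = correctRegisterValue (E.conf z) t a ∧
                        (E.conf z).r a t = (RegFlag.Idle, 0) ∧ t < a :=
                      E.act_eligible z hzT t _ hA
                    rw [hg.2.1] at hp; exact absurd hp (by simp)
                | marriage a =>
                    have hg : G.Adj t a ∧ (E.conf z).p t = none ∧
                        (E.conf z).r t a = correctRegisterValue (E.conf z) t a ∧
                        (E.conf z).r a t = (RegFlag.You, 0) ∧ a < t :=
                      E.act_eligible z hzT t _ hA
                    rw [hg.2.1] at hp; exact absurd hp (by simp)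
                | increase =>
                    exfalso
                    have hg : ∃ v, (E.conf z).p t = some v ∧
                        (E.conf z).r t v = correctRegisterValue (E.conf z) t v ∧
                        ((E.conf z).r v t).1 = RegFlag.You ∧
                        (((E.conf z).m t = 0 ∧ ((t < v ∧ ((E.conf z).r v t).2 = 1) ∨
                            (v < t ∧ ((E.conf z).r v t).2 = 0))) ∨
                         ((E.conf z).m t = 1 ∧ ((t < v ∧ ((E.conf z).r v t).2 = 1) ∨
                            (v < t ∧ ((E.conf z).r v t).2 = 2)))) :=
                      E.act_eligible z hzT t _ hA
                    obtain ⟨v, hpv2, -, -, hd2⟩ := hg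
                    have hv2 : s = v := by
                      rw [hp] at hpv2; injection hpv2 with h
                    subst v
                    rcases hd2 with ⟨h0, -⟩ | ⟨-, hc⟩
                    · rw [hm] at h0; exact absurd h0 (by decide)
                    · rcases hc with ⟨hts, -⟩ | ⟨-, h2⟩
                      · exact hnst hts
                      · exact hRz.2 h2
                | reset =>
                    exfalso
                    have hg : ∃ v, (E.conf z).p t = some v ∧
                        (E.conf z).r t v = correctRegisterValue (E.conf z) t v ∧
                        (PRabandonment (E.conf z) t ∨ PRreset (E.conf z) t) :=
                      E.act_eligible z hzT t _ hA
                    obtain ⟨v, -, -, hab⟩ := hg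
                    rcases hab with ⟨v', hpv', hor⟩ | ⟨v', hpv', -, hdis⟩
                    · have hv2 : v' = s := by
                        rw [hp] at hpv'; injection hpv' with h; exact h.symm
                      subst hv2
                      rcases hor with ⟨hne, -⟩ | ⟨-, hts⟩
                      · exact hne hRz.1
                      · exact hnst hts
                    · have hv2 : v' = s := by
                        rw [hp] at hpv'; injection hpv' with h; exact h.symm
                      subst hv2
                      rcases hdis with ⟨h0, -⟩ | ⟨h0, -⟩ | ⟨h0, -, -⟩ |
                        ⟨-, -, hts⟩ | ⟨-, -, hts⟩ | ⟨h0, -, -⟩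
                      · rw [hm] at h0; exact absurd h0 (by decide)
                      · rw [hm] at h0; exact absurd h0 (by decide)
                      · rw [hm] at h0; exact absurd h0 (by decide)
                      · exact hnst hts
                      · exact hnst hts
                      · rw [hm] at h0; exact absurd h0 (by decide)
          -- conclude
          obtain ⟨hptl, hmtl, hrtsl⟩ := hI l (by omega) le_rfl
          obtain ⟨hY, h2⟩ := hR l (by omega) le_rfl
          refine ⟨1, 1, ?_⟩
          rcases fin2 _ h2 with hc | hc
          · right
            exact ⟨⟨hlp, hptl, hlm, hmtl⟩,
              Or.inr ⟨Or.inl rfl, pext _ _ _ hY (hc.trans (by decide)), hrtsl⟩⟩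
          · left
            exact ⟨⟨hlp, hptl, hlm, hmtl⟩, pext _ _ _ hY hc, hrtsl,
              Or.inr (Or.inr (Or.inl rfl))⟩
  · -- no move of t at or before w : contradiction via the rule of t at i
    exfalso
    push_neg at hex
    have hpm : ∀ x, x ≤ w → (E.conf x).p t = some s ∧ (E.conf x).m t = 1 := by
      intro x hx
      have h3 := pm_const E t (a := x) (b := w) hx (le_of_lt hwT)
        (fun z hz1 hz2 => by simpa using hex z (by omega))
      exact ⟨h3.1.symm.trans hptw, h3.2.symm.trans hmtw⟩
    have hiw : i ≤ w := by omega
    have hwrite_i : E.act i t = some (Rule.write s) := by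
      rcases hidisj with h | h | h | ⟨h | h, -⟩
      · exact h
      all_goals exact absurd (by rw [h]; rfl : isMv (E.act i t) = true) (hex i hiw)
    have hpmi := hpm i hiw
    have hrtsi1 : (E.conf (i + 1)).r t s = (RegFlag.You, 1) := by
      rw [r_succ_write E t s hiT hwrite_i, correct_of_you hpmi.1, hpmi.2]
    have hfin : ((E.conf k).r t s).1 = RegFlag.You := by
      refine conf_invariant E (P := fun C => (C.r t s).1 = RegFlag.You)
        (a := i + 1) (b := k) (by omega) (le_of_lt hkT) ?_ ?_
      · show ((E.conf (i + 1)).r t s).1 = RegFlag.You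
        rw [hrtsi1]
      · intro z hz1 hz2 hP
        have hzT : z < E.T := lt_trans hz2 hkT
        show ((E.conf (z + 1)).r t s).1 = RegFlag.You
        by_cases hA : E.act z t = some (Rule.write s)
        · rw [r_succ_write E t s hzT hA, correct_of_you (hpm z (by omega)).1]
        · rw [r_succ_quiet E t s hzT hA]; exact hP
    rw [hrtsk] at hfin; exact absurd hfin (by decide)
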